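/- arXiv:1908.01105 — 6 statements merged into one kernel-verified Lean document; each statement's English description precedes it below -/
import Mathlib

section
/- For every integer n ≥ 2 and every quaternion q, the Cauchy–Fueter operator applied to the monomial f_n(q) = q^n satisfies ∂(q^n) = −2 · ∑_{k=1}^{n} q^{n−k} (conj q)^{k−1}. -/
open Quaternion

noncomputable section

/-- The imaginary unit `i` of the quaternions. -/
def qI : ℍ[ℝ] := ⟨0, 1, 0, 0⟩

/-- The imaginary unit `j` of the quaternions. -/
def qJ : ℍ[ℝ] := ⟨0, 0, 1, 0⟩

/-- The imaginary unit `k` of the quaternions. -/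
def qK : ℍ[ℝ] := ⟨0, 0, 0, 1⟩

/-- Directional (partial) derivative of `f : ℍ → ℍ` along the direction `v`, at `q`. -/
def dd (v : ℍ[ℝ]) (f : ℍ[ℝ] → ℍ[ℝ]) (q : ℍ[ℝ]) : ℍ[ℝ] := fderiv ℝ f q v

/-- The Cauchy–Fueter operator `∂f = ∂_{x₀}f + i ∂_{x₁}f + j ∂_{x₂}f + k ∂_{x₃}f`. -/
def CF (f : ℍ[ℝ] → ℍ[ℝ]) (q : ℍ[ℝ]) : ℍ[ℝ] :=
  dd 1 f q + qI * dd qI f q + qJ * dd qJ f q + qK * dd qK f q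

/-- The conjugate Cauchy–Fueter operator `∂̄f = ∂_{x₀}f − i ∂_{x₁}f − j ∂_{x₂}f − k ∂_{x₃}f`. -/
def CFbar (f : ℍ[ℝ] → ℍ[ℝ]) (q : ℍ[ℝ]) : ℍ[ℝ] :=
  dd 1 f q - qI * dd qI f q - qJ * dd qJ f q - qK * dd qK f q

/-- The Laplacian `Δf = ∂²_{x₀}f + ∂²_{x₁}f + ∂²_{x₂}f + ∂²_{x₃}f` on `ℍ ≅ ℝ⁴`. -/
def lap (f : ℍ[ℝ] → ℍ[ℝ]) (q : ℍ[ℝ]) : ℍ[ℝ] :=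
  dd 1 (dd 1 f) q + dd qI (dd qI f) q + dd qJ (dd qJ f) q + dd qK (dd qK f) q

lemma unit_conj (a : ℍ[ℝ]) : a + qI * a * qI + qJ * a * qJ + qK * a * qK = -2 * star a := by
  have h2 : (-2 : ℍ[ℝ]) * star a = -(star a + star a) := by rw [neg_mul, two_mul]
  rw [h2]
  have hI : qI.re = 0 ∧ qI.imI = 1 ∧ qI.imJ = 0 ∧ qI.imK = 0 := ⟨rfl, rfl, rfl, rfl⟩
  have hJ : qJ.re = 0 ∧ qJ.imI = 0 ∧ qJ.imJ = 1 ∧ qJ.imK = 0 := ⟨rfl, rfl, rfl, rfl⟩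
  have hK : qK.re = 0 ∧ qK.imI = 0 ∧ qK.imJ = 0 ∧ qK.imK = 1 := ⟨rfl, rfl, rfl, rfl⟩
  ext <;> simp [hI, hJ, hK, Quaternion.re_mul, Quaternion.imI_mul, Quaternion.imJ_mul, Quaternion.imK_mul] <;> ring

lemma key (n : ℕ) (q : ℍ[ℝ]) : ∃ L : ℍ[ℝ] →L[ℝ] ℍ[ℝ],
    HasFDerivAt (fun p : ℍ[ℝ] => p ^ n) L q ∧
    ∀ v, L v = ∑ i ∈ Finset.range n, q ^ i * v * q ^ (n - 1 - i) := by
  induction n with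
  | zero => exact ⟨0, by simpa using hasFDerivAt_const (1 : ℍ[ℝ]) q, by simp⟩
  | succ n ih =>
    obtain ⟨L, hL, hLv⟩ := ih
    refine ⟨q ^ n • ContinuousLinearMap.id ℝ _ + L.smulRight q, ?_, ?_⟩
    · have := hL.mul' (hasFDerivAt_id q)
      have e : L.smulRight q = MulOpposite.op q • L := by ext v : 1; simp
      have h3 : ((fun p : ℍ[ℝ] => p ^ n) * id) = fun p => p ^ (n + 1) := by funext p; simp [pow_succ]
      rw [e, ← h3]
      exact this
    · intro v
      simp only [ContinuousLinearMap.add_apply, ContinuousLinearMap.smul_apply,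
        ContinuousLinearMap.smulRight_apply, ContinuousLinearMap.id_apply, hLv,
        Finset.sum_range_succ, smul_eq_mul, Finset.sum_mul]
      rw [add_comm]
      congr 1
      · refine Finset.sum_congr rfl fun i hi => ?_
        rw [Finset.mem_range] at hi
        have h : n + 1 - 1 - i = (n - 1 - i) + 1 := by omega
        rw [h, pow_succ, ← mul_assoc]
      · simp


/-- For every `n ≥ 2` and every quaternion `q`, the Cauchy–Fueter operator applied to the
monomial `q ^ n` satisfies `∂(q^n) = −2 ∑_{k=1}^n q^{n−k} (conj q)^{k−1}`. -/
theorem cauchyFueter_pow (n : ℕ) (hn : 2 ≤ n) (q : ℍ[ℝ]) :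
    CF (fun p => p ^ n) q =
      (-2 : ℍ[ℝ]) * ∑ k ∈ Finset.Icc 1 n, q ^ (n - k) * (star q) ^ (k - 1) := by
  obtain ⟨L, hL, hLv⟩ := key n q
  have hdd : ∀ v, dd v (fun p => p ^ n) q = ∑ i ∈ Finset.range n, q ^ i * v * q ^ (n - 1 - i) :=
    fun v => by rw [dd, hL.fderiv, hLv]
  have hc : Commute (star q) q := by
    unfold Commute SemiconjBy
    rw [Quaternion.star_mul_self, Quaternion.self_mul_star]
  rw [CF, hdd, hdd, hdd, hdd]
  simp only [Finset.mul_sum]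
  rw [← Finset.sum_add_distrib, ← Finset.sum_add_distrib, ← Finset.sum_add_distrib]
  have hIcc : Finset.Icc 1 n = Finset.Ico 1 (n + 1) := by
    rw [Finset.Ico_add_one_right_eq_Icc]
  rw [hIcc, Finset.sum_Ico_eq_sum_range]
  simp only [Nat.add_sub_cancel, Nat.add_sub_cancel_left]
  refine Finset.sum_congr rfl fun i hi => ?_
  rw [Finset.mem_range] at hi
  have e1 : q ^ i * 1 * q ^ (n - 1 - i) + qI * (q ^ i * qI * q ^ (n - 1 - i)) +
      qJ * (q ^ i * qJ * q ^ (n - 1 - i)) + qK * (q ^ i * qK * q ^ (n - 1 - i)) =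
      (q ^ i + qI * q ^ i * qI + qJ * q ^ i * qJ + qK * q ^ i * qK) * q ^ (n - 1 - i) := by
    noncomm_ring
  rw [e1, unit_conj, star_pow]
  have e2 : n - 1 - i = n - (1 + i) := by omega
  rw [e2, mul_assoc, (hc.pow_pow i (n - (1 + i)))]

end
end

section
/- For every integer n ≥ 2 and every quaternion q, the Laplacian of the monomial f_n(q) = q^n satisfies Δ(q^n) = −4 · ∑_{k=1}^{n−1} (n−k) q^{n−k−1} (conj q)^{k−1}. -/
open Quaternion

noncomputable section

/-! ### Auxiliary material -/

/-- The derivative of `p ↦ p ^ n` at `q`, as a continuous linear map. -/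
def D (n : ℕ) (q : ℍ[ℝ]) : ℍ[ℝ] →L[ℝ] ℍ[ℝ] :=
  ∑ i ∈ Finset.range n, ContinuousLinearMap.mulLeftRight ℝ ℍ[ℝ] (q ^ i) (q ^ (n - 1 - i))

lemma D_apply (n : ℕ) (q v : ℍ[ℝ]) :
    D n q v = ∑ i ∈ Finset.range n, q ^ i * v * q ^ (n - 1 - i) := by
  simp [D, ContinuousLinearMap.sum_apply, ContinuousLinearMap.mulLeftRight_apply]

lemma hasFDerivAt_qpow (n : ℕ) (q : ℍ[ℝ]) :
    HasFDerivAt (fun p : ℍ[ℝ] => p ^ n) (D n q) q := by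
  induction n with
  | zero => simpa [D] using hasFDerivAt_const (1 : ℍ[ℝ]) q
  | succ n ih =>
    have h := ih.mul' (hasFDerivAt_id q)
    have e : ((fun p : ℍ[ℝ] => p ^ n) * id) = fun p => p ^ (n + 1) := by
      funext p; simp [pow_succ]
    rw [e] at h
    refine h.congr_fderiv (Eq.symm ?_)
    refine ContinuousLinearMap.ext fun v => ?_
    simp only [D_apply, ContinuousLinearMap.add_apply, ContinuousLinearMap.smul_apply,
      ContinuousLinearMap.smulRight_apply, ContinuousLinearMap.coe_id', id_eq, smul_eq_mul, MulOpposite.smul_eq_mul_unop, MulOpposite.unop_op,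
      Finset.sum_range_succ, Finset.sum_mul]
    rw [add_comm (q ^ n * v)]
    congr 1
    · apply Finset.sum_congr rfl
      intro i hi
      rw [Finset.mem_range] at hi
      rw [mul_assoc, mul_assoc, ← pow_succ]
      have : n + 1 - 1 - i = n - 1 - i + 1 := by omega
      rw [this, mul_assoc]
    · rw [Nat.add_sub_cancel, Nat.sub_self, pow_zero, mul_one]

lemma coe_two' : ((2 : ℝ) : ℍ[ℝ]) = 2 := by
  have := Quaternion.coe_add (1 : ℝ) 1
  norm_num at this ⊢
  exact this

lemma neg_two_coe : ((-2 : ℍ[ℝ])) = ((-2 : ℝ) : ℍ[ℝ]) := by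
  rw [Quaternion.coe_neg, coe_two']

lemma sandwich (p : ℍ[ℝ]) :
    1 * p * 1 + qI * p * qI + qJ * p * qJ + qK * p * qK = (-2 : ℍ[ℝ]) * star p := by
  rw [neg_two_coe]
  ext <;> simp [Quaternion.re_mul, Quaternion.imI_mul, Quaternion.imJ_mul, Quaternion.imK_mul] <;> simp [qI, qJ, qK] <;> ring

lemma comm_star (q : ℍ[ℝ]) : Commute q (star q) := by
  have h : star q = ((2 * q.re : ℝ) : ℍ[ℝ]) - q := by
    rw [← Quaternion.self_add_star' q]; abel
  rw [h]
  exact ((Quaternion.coe_commute (2 * q.re) q).symm).sub_right (Commute.refl q)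

lemma comm_star_pow (q : ℍ[ℝ]) (a b : ℕ) : Commute (q ^ a) ((star q) ^ b) :=
  (comm_star q).pow_pow a b

lemma comm_neg_two (x : ℍ[ℝ]) : Commute ((-2 : ℍ[ℝ])) x := by
  rw [neg_two_coe]; exact Quaternion.coe_commute (-2 : ℝ) x

lemma move (q : ℍ[ℝ]) (a m j : ℕ) :
    q ^ a * ((-2 : ℍ[ℝ]) * (star q) ^ m) * q ^ j
      = (-2 : ℍ[ℝ]) * (q ^ (a + j) * (star q) ^ m) := by
  have h1 : (-2 : ℍ[ℝ]) * q ^ a = q ^ a * (-2 : ℍ[ℝ]) := (comm_neg_two (q ^ a)).eq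
  have h2 : (star q) ^ m * q ^ j = q ^ j * (star q) ^ m := ((comm_star_pow q j m).symm).eq
  calc q ^ a * ((-2 : ℍ[ℝ]) * (star q) ^ m) * q ^ j
      = (q ^ a * (-2 : ℍ[ℝ])) * ((star q) ^ m * q ^ j) := by
        rw [mul_assoc, mul_assoc, mul_assoc]
    _ = ((-2 : ℍ[ℝ]) * q ^ a) * (q ^ j * (star q) ^ m) := by rw [h1, h2]
    _ = (-2 : ℍ[ℝ]) * (q ^ (a + j) * (star q) ^ m) := by
        rw [mul_assoc, ← mul_assoc (q ^ a), ← pow_add]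

lemma dd_pow (v : ℍ[ℝ]) (n : ℕ) :
    dd v (fun p => p ^ n) = fun p => ∑ i ∈ Finset.range n, p ^ i * v * p ^ (n - 1 - i) := by
  funext p
  rw [dd, (hasFDerivAt_qpow n p).fderiv, D_apply]

lemma dd_dd_pow (v : ℍ[ℝ]) (n : ℕ) (q : ℍ[ℝ]) :
    dd v (dd v (fun p => p ^ n)) q =
      ∑ i ∈ Finset.range n,
        ((∑ a ∈ Finset.range i, q ^ a * v * q ^ (i - 1 - a)) * v * q ^ (n - 1 - i)
          + q ^ i * v * ∑ b ∈ Finset.range (n - 1 - i),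
              q ^ b * v * q ^ (n - 1 - i - 1 - b)) := by
  rw [dd_pow]
  have h : HasFDerivAt (fun p : ℍ[ℝ] => ∑ i ∈ Finset.range n, p ^ i * v * p ^ (n - 1 - i))
      (∑ i ∈ Finset.range n,
        ((q ^ i * v) • D (n - 1 - i) q + ((D i q).smulRight v).smulRight (q ^ (n - 1 - i)))) q := by
    apply HasFDerivAt.fun_sum
    intro i _
    refine HasFDerivAt.congr_fderiv (((hasFDerivAt_qpow i q).mul_const' v).mul' (hasFDerivAt_qpow (n - 1 - i) q)) ?_
    refine ContinuousLinearMap.ext fun w => ?_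
    simp only [ContinuousLinearMap.add_apply, ContinuousLinearMap.smul_apply,
      ContinuousLinearMap.smulRight_apply, smul_eq_mul, MulOpposite.smul_eq_mul_unop, MulOpposite.unop_op]
  rw [dd, h.fderiv, ContinuousLinearMap.sum_apply]
  apply Finset.sum_congr rfl
  intro i _
  simp only [ContinuousLinearMap.add_apply, ContinuousLinearMap.smul_apply,
    ContinuousLinearMap.smulRight_apply, smul_eq_mul, D_apply]
  rw [add_comm]

lemma dir1 (q : ℍ[ℝ]) (i j : ℕ) :
    (∑ a ∈ Finset.range i, q ^ a * (1 : ℍ[ℝ]) * q ^ (i - 1 - a)) * 1 * q ^ j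
      + (∑ a ∈ Finset.range i, q ^ a * qI * q ^ (i - 1 - a)) * qI * q ^ j
      + (∑ a ∈ Finset.range i, q ^ a * qJ * q ^ (i - 1 - a)) * qJ * q ^ j
      + (∑ a ∈ Finset.range i, q ^ a * qK * q ^ (i - 1 - a)) * qK * q ^ j
    = ∑ a ∈ Finset.range i, q ^ a * ((-2 : ℍ[ℝ]) * star (q ^ (i - 1 - a))) * q ^ j := by
  simp only [Finset.sum_mul]
  rw [← Finset.sum_add_distrib, ← Finset.sum_add_distrib, ← Finset.sum_add_distrib]
  apply Finset.sum_congr rfl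
  intro a _
  rw [← sandwich (q ^ (i - 1 - a))]
  simp only [mul_add, add_mul, mul_assoc]

lemma dir2 (q : ℍ[ℝ]) (i j : ℕ) :
    q ^ i * (1 : ℍ[ℝ]) * (∑ b ∈ Finset.range j, q ^ b * (1 : ℍ[ℝ]) * q ^ (j - 1 - b))
      + q ^ i * qI * (∑ b ∈ Finset.range j, q ^ b * qI * q ^ (j - 1 - b))
      + q ^ i * qJ * (∑ b ∈ Finset.range j, q ^ b * qJ * q ^ (j - 1 - b))
      + q ^ i * qK * (∑ b ∈ Finset.range j, q ^ b * qK * q ^ (j - 1 - b))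
    = ∑ b ∈ Finset.range j, q ^ i * ((-2 : ℍ[ℝ]) * star (q ^ b)) * q ^ (j - 1 - b) := by
  simp only [Finset.mul_sum]
  rw [← Finset.sum_add_distrib, ← Finset.sum_add_distrib, ← Finset.sum_add_distrib]
  apply Finset.sum_congr rfl
  intro b _
  rw [← sandwich (q ^ b)]
  simp only [mul_add, add_mul, mul_assoc]

lemma count_sum {M : Type*} [AddCommMonoid M] (c : ℕ → M) (n : ℕ) :
    ∑ i ∈ Finset.range n, ∑ b ∈ Finset.range i, c b
      = ∑ b ∈ Finset.range n, (n - 1 - b) • c b := by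
  induction n with
  | zero => simp
  | succ n ih =>
    rw [Finset.sum_range_succ, ih, Finset.sum_range_succ (f := fun b => (n + 1 - 1 - b) • c b)]
    simp only [Nat.add_sub_cancel, Nat.sub_self, zero_smul, add_zero]
    rw [← Finset.sum_add_distrib]
    apply Finset.sum_congr rfl
    intro b hb
    rw [Finset.mem_range] at hb
    have h1 : n - b = (n - 1 - b) + 1 := by omega
    rw [h1, succ_nsmul]

/-- For every `n ≥ 2` and every quaternion `q`, the Laplacian of the monomial `q ^ n` satisfies
`Δ(q^n) = −4 ∑_{k=1}^{n−1} (n−k) q^{n−k−1} (conj q)^{k−1}`. -/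
theorem laplacian_pow (n : ℕ) (hn : 2 ≤ n) (q : ℍ[ℝ]) :
    lap (fun p => p ^ n) q =
      (-4 : ℍ[ℝ]) * ∑ k ∈ Finset.Icc 1 (n - 1),
        ((n - k : ℕ) : ℍ[ℝ]) * (q ^ (n - k - 1) * (star q) ^ (k - 1)) := by
  set c : ℕ → ℍ[ℝ] := fun b => q ^ (n - 2 - b) * (star q) ^ b with hc
  -- rewrite the RHS
  have hRHS : ∑ k ∈ Finset.Icc 1 (n - 1),
      ((n - k : ℕ) : ℍ[ℝ]) * (q ^ (n - k - 1) * (star q) ^ (k - 1))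
      = ∑ b ∈ Finset.range n, (n - 1 - b) • c b := by
    have h1 : Finset.Icc 1 (n - 1) = Finset.Ico 1 n := by
      rw [← Finset.Ico_add_one_right_eq_Icc]
      congr 1
      omega
    rw [h1, Finset.sum_Ico_eq_sum_range]
    have h2 : n = (n - 1) + 1 := by omega
    conv_rhs => rw [h2, Finset.sum_range_succ]
    rw [show (n - 1 + 1) - 1 - (n - 1) = 0 from by omega, zero_smul, add_zero]
    apply Finset.sum_congr rfl
    intro b hb
    rw [Finset.mem_range] at hb
    simp only [nsmul_eq_mul, hc]
    have e1 : n - (1 + b) = n - 1 - b := by omega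
    have e2 : n - (1 + b) - 1 = n - 2 - b := by omega
    have e3 : 1 + b - 1 = b := by omega
    have e4 : n - 1 + 1 - 1 - b = n - 1 - b := by omega
    rw [e2, e1, e3, e4]
  rw [hRHS]
  -- compute the LHS
  rw [lap, dd_dd_pow, dd_dd_pow, dd_dd_pow, dd_dd_pow,
    ← Finset.sum_add_distrib, ← Finset.sum_add_distrib, ← Finset.sum_add_distrib]
  have key : ∀ i ∈ Finset.range n,
      ((∑ a ∈ Finset.range i, q ^ a * (1:ℍ[ℝ]) * q ^ (i - 1 - a)) * 1 * q ^ (n - 1 - i)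
          + q ^ i * 1 * ∑ b ∈ Finset.range (n - 1 - i), q ^ b * 1 * q ^ (n - 1 - i - 1 - b))
      + ((∑ a ∈ Finset.range i, q ^ a * qI * q ^ (i - 1 - a)) * qI * q ^ (n - 1 - i)
          + q ^ i * qI * ∑ b ∈ Finset.range (n - 1 - i), q ^ b * qI * q ^ (n - 1 - i - 1 - b))
      + ((∑ a ∈ Finset.range i, q ^ a * qJ * q ^ (i - 1 - a)) * qJ * q ^ (n - 1 - i)
          + q ^ i * qJ * ∑ b ∈ Finset.range (n - 1 - i), q ^ b * qJ * q ^ (n - 1 - i - 1 - b))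
      + ((∑ a ∈ Finset.range i, q ^ a * qK * q ^ (i - 1 - a)) * qK * q ^ (n - 1 - i)
          + q ^ i * qK * ∑ b ∈ Finset.range (n - 1 - i), q ^ b * qK * q ^ (n - 1 - i - 1 - b))
      = (-2 : ℍ[ℝ]) * ((∑ a ∈ Finset.range i, c a) + ∑ b ∈ Finset.range (n - 1 - i), c b) := by
    intro i hi
    rw [Finset.mem_range] at hi
    have hre : ∀ x1 y1 x2 y2 x3 y3 x4 y4 : ℍ[ℝ],
        (x1 + y1) + (x2 + y2) + (x3 + y3) + (x4 + y4)
          = (x1 + x2 + x3 + x4) + (y1 + y2 + y3 + y4) := fun _ _ _ _ _ _ _ _ => by abel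
    rw [hre, dir1 q i (n - 1 - i), dir2 q i (n - 1 - i)]
    rw [mul_add]
    congr 1
    · -- first sum
      have : ∀ a ∈ Finset.range i,
          q ^ a * ((-2 : ℍ[ℝ]) * star (q ^ (i - 1 - a))) * q ^ (n - 1 - i)
            = (-2 : ℍ[ℝ]) * c (i - 1 - a) := by
        intro a ha
        rw [Finset.mem_range] at ha
        rw [star_pow, move, hc]
        have : a + (n - 1 - i) = n - 2 - (i - 1 - a) := by omega
        rw [this]
      rw [Finset.sum_congr rfl this, ← Finset.mul_sum,
        Finset.sum_range_reflect (fun a => c a) i]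
    · -- second sum
      have : ∀ b ∈ Finset.range (n - 1 - i),
          q ^ i * ((-2 : ℍ[ℝ]) * star (q ^ b)) * q ^ (n - 1 - i - 1 - b)
            = (-2 : ℍ[ℝ]) * c b := by
        intro b hb
        rw [Finset.mem_range] at hb
        rw [star_pow, move, hc]
        have : i + (n - 1 - i - 1 - b) = n - 2 - b := by omega
        rw [this]
      rw [Finset.sum_congr rfl this, ← Finset.mul_sum]
  rw [Finset.sum_congr rfl key]
  -- now combine the two double sums
  have hrefl : ∑ i ∈ Finset.range n, ∑ b ∈ Finset.range (n - 1 - i), c b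
      = ∑ i ∈ Finset.range n, ∑ b ∈ Finset.range i, c b := by
    have := Finset.sum_range_reflect (fun i => ∑ b ∈ Finset.range i, c b) n
    calc ∑ i ∈ Finset.range n, ∑ b ∈ Finset.range (n - 1 - i), c b
        = ∑ i ∈ Finset.range n, (fun i => ∑ b ∈ Finset.range i, c b) (n - 1 - i) := rfl
      _ = ∑ i ∈ Finset.range n, ∑ b ∈ Finset.range i, c b := this
  simp only [mul_add]
  rw [Finset.sum_add_distrib, ← Finset.mul_sum, ← Finset.mul_sum, hrefl, ← mul_add,
    ← two_mul, ← mul_assoc, count_sum]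
  norm_num

end
end

section
/- Let f : ℍ → ℍ be a real-differentiable function which is left Fueter regular, i.e. ∂f(q) = 0 for all q ∈ ℍ. Then for every q = x₀ + x₁ i + x₂ j + x₃ k one has ∂̄(q·f)(q) = 4 f(q) + 2 ∑_{l=0}^{3} x_l ∂_{x_l} f(q), where q·f denotes the function p ↦ p·f(p). -/
open Quaternion

noncomputable section

lemma dd_mul (f : ℍ[ℝ] → ℍ[ℝ]) (hf : Differentiable ℝ f) (v q : ℍ[ℝ]) :
    dd v (fun p => p * f p) q = v * f q + q * dd v f q := by
  have h : HasFDerivAt (fun p : ℍ[ℝ] => p * f p)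
      (q • (fderiv ℝ f q) + (ContinuousLinearMap.id ℝ ℍ[ℝ]).smulRight (f q)) q :=
    (hasFDerivAt_id q).mul' (hf q).hasFDerivAt
  simp [dd, h.fderiv, smul_eq_mul, add_comm]

lemma qI_re : qI.re = 0 := rfl
lemma qI_imI : qI.imI = 1 := rfl
lemma qI_imJ : qI.imJ = 0 := rfl
lemma qI_imK : qI.imK = 0 := rfl
lemma qJ_re : qJ.re = 0 := rfl
lemma qJ_imI : qJ.imI = 0 := rfl
lemma qJ_imJ : qJ.imJ = 1 := rfl
lemma qJ_imK : qJ.imK = 0 := rfl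
lemma qK_re : qK.re = 0 := rfl
lemma qK_imI : qK.imI = 0 := rfl
lemma qK_imJ : qK.imJ = 0 := rfl
lemma qK_imK : qK.imK = 1 := rfl

set_option maxHeartbeats 1000000 in
lemma quat_alg (q a b c d F : ℍ[ℝ]) (h : a + qI * b + qJ * c + qK * d = 0) :
    (1 * F + q * a) - qI * (qI * F + q * b) - qJ * (qJ * F + q * c)
      - qK * (qK * F + q * d) =
    4 * F + 2 * ((q.re : ℍ[ℝ]) * a + (q.imI : ℍ[ℝ]) * b + (q.imJ : ℍ[ℝ]) * c
      + (q.imK : ℍ[ℝ]) * d) := by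
  rw [Quaternion.ext_iff] at h
  obtain ⟨h0, h1, h2, h3⟩ := h
  simp only [Quaternion.re_mul, Quaternion.imI_mul, Quaternion.imJ_mul, Quaternion.imK_mul,
      qI_re, qI_imI, qI_imJ, qI_imK, qJ_re, qJ_imI, qJ_imJ, qJ_imK, qK_re, qK_imI, qK_imJ, qK_imK,
    Quaternion.re_add, Quaternion.imI_add, Quaternion.imJ_add, Quaternion.imK_add,
    Quaternion.re_zero, Quaternion.imI_zero, Quaternion.imJ_zero, Quaternion.imK_zero] at h0 h1 h2 h3
  rw [show (4:ℍ[ℝ]) * F = F + F + F + F from by noncomm_ring, two_mul]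
  rw [Quaternion.ext_iff]
  refine ⟨?_, ?_, ?_, ?_⟩ <;>
    simp only [Quaternion.re_mul, Quaternion.imI_mul, Quaternion.imJ_mul, Quaternion.imK_mul,
      qI_re, qI_imI, qI_imJ, qI_imK, qJ_re, qJ_imI, qJ_imJ, qJ_imK, qK_re, qK_imI, qK_imJ, qK_imK,
      Quaternion.re_add, Quaternion.imI_add, Quaternion.imJ_add, Quaternion.imK_add,
      Quaternion.re_sub, Quaternion.imI_sub, Quaternion.imJ_sub, Quaternion.imK_sub,
      Quaternion.re_coe, Quaternion.imI_coe, Quaternion.imJ_coe, Quaternion.imK_coe,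
      Quaternion.re_one, Quaternion.imI_one, Quaternion.imJ_one, Quaternion.imK_one]
  · linear_combination (-q.re) * h0 - q.imI * h1 - q.imJ * h2 - q.imK * h3
  · linear_combination q.imI * h0 - q.re * h1 + q.imJ * h3 - q.imK * h2
  · linear_combination q.imJ * h0 - q.re * h2 - q.imI * h3 + q.imK * h1
  · linear_combination q.imK * h0 - q.re * h3 + q.imI * h2 - q.imJ * h1

/-- If `f : ℍ → ℍ` is real-differentiable and left Fueter regular (`∂f ≡ 0`), then
`∂̄(q·f)(q) = 4 f(q) + 2 ∑_{l=0}^{3} x_l ∂_{x_l} f(q)`. -/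
theorem cfbar_mul_left_of_fueterRegular (f : ℍ[ℝ] → ℍ[ℝ]) (hf : Differentiable ℝ f)
    (hreg : ∀ q : ℍ[ℝ], CF f q = 0) (q : ℍ[ℝ]) :
    CFbar (fun p => p * f p) q =
      4 * f q + 2 * ((q.re : ℍ[ℝ]) * dd 1 f q + (q.imI : ℍ[ℝ]) * dd qI f q +
        (q.imJ : ℍ[ℝ]) * dd qJ f q + (q.imK : ℍ[ℝ]) * dd qK f q) := by
  have h := hreg q
  unfold CF at h
  unfold CFbar
  rw [dd_mul f hf 1 q, dd_mul f hf qI q, dd_mul f hf qJ q, dd_mul f hf qK q]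
  exact quat_alg q (dd 1 f q) (dd qI f q) (dd qJ f q) (dd qK f q) (f q) h

end
end

section
/- For every integer k ≥ 1 and every quaternion q, the polynomials Q_k satisfy the Appell property (1/2)·∂̄Q_k(q) = k · Q_{k−1}(q) with respect to the hypercomplex derivative (1/2)∂̄. -/
open Quaternion

noncomputable section

/-- The coefficients `T^k_j = 2(k−j+1)/((k+1)(k+2))`. -/
def T (k j : ℕ) : ℝ := 2 * ((k : ℝ) - j + 1) / (((k : ℝ) + 1) * ((k : ℝ) + 2))

/-- The Fueter regular polynomials `Q_k(q) = ∑_{j=0}^k T^k_j q^{k−j} (conj q)^j`. -/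
def Q (k : ℕ) (q : ℍ[ℝ]) : ℍ[ℝ] :=
  ∑ j ∈ Finset.range (k + 1), ((T k j : ℝ) : ℍ[ℝ]) * (q ^ (k - j) * (star q) ^ j)

namespace AppellAux

instance : StarModule ℝ ℍ[ℝ] := ⟨fun r q => by ext <;> simp⟩

instance : ContinuousStar ℍ[ℝ] := ⟨by
  have h : (star : ℍ[ℝ] → ℍ[ℝ]) = fun q => (((2 * q.re : ℝ) : ℍ[ℝ]) - q) :=
    funext fun q => q.star_eq_two_re_sub
  rw [h]
  exact (Quaternion.continuous_coe.comp (continuous_const.mul Quaternion.continuous_re)).sub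
    continuous_id⟩

def Dpow (n : ℕ) (q : ℍ[ℝ]) : ℍ[ℝ] →L[ℝ] ℍ[ℝ] :=
  ∑ i ∈ Finset.range n, ContinuousLinearMap.mulLeftRight ℝ ℍ[ℝ] (q ^ i) (q ^ (n - 1 - i))

lemma Dpow_apply (n : ℕ) (q v : ℍ[ℝ]) :
    Dpow n q v = ∑ i ∈ Finset.range n, q ^ i * v * q ^ (n - 1 - i) := by
  simp [Dpow]

lemma Dpow_succ (n : ℕ) (q : ℍ[ℝ]) :
    Dpow (n + 1) q = q ^ n • ContinuousLinearMap.id ℝ ℍ[ℝ] + (Dpow n q).smulRight q := by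
  refine ContinuousLinearMap.ext fun v => ?_
  simp only [Dpow_apply, ContinuousLinearMap.add_apply, ContinuousLinearMap.smul_apply,
    ContinuousLinearMap.coe_id', id_eq, smul_eq_mul, ContinuousLinearMap.smulRight_apply,
    Finset.sum_mul]
  rw [Finset.sum_range_succ, Nat.add_sub_cancel, Nat.sub_self, pow_zero, mul_one, add_comm]
  congr 1
  refine Finset.sum_congr rfl fun i hi => ?_
  have h1 : n - i = (n - 1 - i) + 1 := by have := Finset.mem_range.mp hi; omega
  rw [h1, pow_succ, ← mul_assoc]

lemma hasFDerivAt_npow (n : ℕ) (q : ℍ[ℝ]) :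
    HasFDerivAt (fun x : ℍ[ℝ] => x ^ n) (Dpow n q) q := by
  induction n with
  | zero => simpa [Dpow] using hasFDerivAt_const (1 : ℍ[ℝ]) q
  | succ n ih =>
    rw [Dpow_succ]
    simp only [pow_succ]
    exact ih.mul' (hasFDerivAt_id q)

def starCLM : ℍ[ℝ] →L[ℝ] ℍ[ℝ] := ((starL' ℝ : ℍ[ℝ] ≃L[ℝ] ℍ[ℝ]) : ℍ[ℝ] →L[ℝ] ℍ[ℝ])

@[simp] lemma starCLM_apply (v : ℍ[ℝ]) : starCLM v = star v := rfl

lemma hasFDerivAt_star' (q : ℍ[ℝ]) : HasFDerivAt (fun x : ℍ[ℝ] => star x) starCLM q := by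
  simpa [starCLM] using (hasFDerivAt_id q).star

def Dmono (m n : ℕ) (q : ℍ[ℝ]) : ℍ[ℝ] →L[ℝ] ℍ[ℝ] :=
  q ^ m • ((Dpow n (star q)).comp starCLM) + (Dpow m q).smulRight ((star q) ^ n)

lemma hasFDerivAt_mono (m n : ℕ) (q : ℍ[ℝ]) :
    HasFDerivAt (fun x : ℍ[ℝ] => x ^ m * (star x) ^ n) (Dmono m n q) q := by
  have h2 : HasFDerivAt (fun x : ℍ[ℝ] => (star x) ^ n) ((Dpow n (star q)).comp starCLM) q :=
    (hasFDerivAt_npow n (star q)).comp q (hasFDerivAt_star' q)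
  exact (hasFDerivAt_npow m q).mul' h2

lemma dd_mono (m n : ℕ) (v q : ℍ[ℝ]) :
    dd v (fun x => x ^ m * (star x) ^ n) q
      = q ^ m * (∑ i ∈ Finset.range n, (star q) ^ i * star v * (star q) ^ (n - 1 - i))
        + (∑ i ∈ Finset.range m, q ^ i * v * q ^ (m - 1 - i)) * (star q) ^ n := by
  rw [dd, (hasFDerivAt_mono m n q).fderiv]
  simp only [Dmono, ContinuousLinearMap.add_apply, ContinuousLinearMap.smul_apply,
    ContinuousLinearMap.comp_apply, ContinuousLinearMap.smulRight_apply, Dpow_apply,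
    starCLM_apply, smul_eq_mul]

lemma hasFDerivAt_Q (k : ℕ) (q : ℍ[ℝ]) :
    HasFDerivAt (Q k)
      (∑ j ∈ Finset.range (k + 1), T k j • Dmono (k - j) j q) q := by
  have hQ : Q k = fun x => ∑ j ∈ Finset.range (k + 1),
      T k j • (x ^ (k - j) * (star x) ^ j) := by
    funext x
    exact Finset.sum_congr rfl fun j _ => Quaternion.coe_mul_eq_smul _ _
  rw [hQ]
  exact HasFDerivAt.fun_sum fun j _ => (hasFDerivAt_mono (k - j) j q).const_smul (T k j)

lemma dd_Q (k : ℕ) (v q : ℍ[ℝ]) :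
    dd v (Q k) q = ∑ j ∈ Finset.range (k + 1),
      ((T k j : ℝ) : ℍ[ℝ]) * dd v (fun x => x ^ (k - j) * (star x) ^ j) q := by
  rw [dd, (hasFDerivAt_Q k q).fderiv]
  simp only [ContinuousLinearMap.sum_apply, ContinuousLinearMap.smul_apply]
  exact Finset.sum_congr rfl fun j _ => by
    rw [dd, (hasFDerivAt_mono (k - j) j q).fderiv, Quaternion.coe_mul_eq_smul]

section Keys
@[simp] lemma re_two : (2 : ℍ[ℝ]).re = 2 := rfl
@[simp] lemma imI_two : (2 : ℍ[ℝ]).imI = 0 := rfl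
@[simp] lemma imJ_two : (2 : ℍ[ℝ]).imJ = 0 := rfl
@[simp] lemma imK_two : (2 : ℍ[ℝ]).imK = 0 := rfl

lemma star_qI : star qI = -qI := by ext <;> simp <;> simp [qI]
lemma star_qJ : star qJ = -qJ := by ext <;> simp <;> simp [qJ]
lemma star_qK : star qK = -qK := by ext <;> simp <;> simp [qK]

lemma comm_star (q : ℍ[ℝ]) : Commute (star q) q := by
  unfold Commute SemiconjBy
  rw [star_comm_self']

set_option maxHeartbeats 2000000 in
lemma key1 (p r s : ℍ[ℝ]) :
    p * 1 * r * s - qI * (p * qI * r * s) - qJ * (p * qJ * r * s) - qK * (p * qK * r * s)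
      = 2 * (p * r * s) + 2 * (star p * r * s) := by
  ext <;> simp only [Quaternion.re_mul, Quaternion.imI_mul, Quaternion.imJ_mul,
    Quaternion.imK_mul, Quaternion.re_sub, Quaternion.imI_sub, Quaternion.imJ_sub,
    Quaternion.imK_sub, Quaternion.re_add, Quaternion.imI_add, Quaternion.imJ_add,
    Quaternion.imK_add, Quaternion.re_one, Quaternion.imI_one, Quaternion.imJ_one,
    Quaternion.imK_one, Quaternion.re_star, Quaternion.imI_star, Quaternion.imJ_star,
    Quaternion.imK_star, re_two, imI_two, imJ_two, imK_two] <;> simp only [qI, qJ, qK] <;> ring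

set_option maxHeartbeats 2000000 in
lemma key2 (p r w : ℍ[ℝ]) :
    p * (r * 1 * w) + qI * (p * (r * qI * w)) + qJ * (p * (r * qJ * w))
      + qK * (p * (r * qK * w)) = -(2 * (star r * star p * w)) := by
  ext <;> simp only [Quaternion.re_mul, Quaternion.imI_mul, Quaternion.imJ_mul,
    Quaternion.imK_mul, Quaternion.re_neg, Quaternion.imI_neg, Quaternion.imJ_neg,
    Quaternion.imK_neg, Quaternion.re_add, Quaternion.imI_add, Quaternion.imJ_add,
    Quaternion.imK_add, Quaternion.re_one, Quaternion.imI_one, Quaternion.imJ_one,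
    Quaternion.imK_one, Quaternion.re_star, Quaternion.imI_star, Quaternion.imJ_star,
    Quaternion.imK_star, re_two, imI_two, imJ_two, imK_two] <;> simp only [qI, qJ, qK] <;> ring
end Keys

lemma termA (m n i : ℕ) (hi : i < m) (q : ℍ[ℝ]) :
    q ^ i * 1 * q ^ (m - 1 - i) * (star q) ^ n - qI * (q ^ i * qI * q ^ (m - 1 - i) * (star q) ^ n)
      - qJ * (q ^ i * qJ * q ^ (m - 1 - i) * (star q) ^ n)
      - qK * (q ^ i * qK * q ^ (m - 1 - i) * (star q) ^ n)
      = 2 * (q ^ (m - 1) * (star q) ^ n) + 2 * (q ^ (m - 1 - i) * (star q) ^ (n + i)) := by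
  rw [key1 (q ^ i) (q ^ (m - 1 - i)) ((star q) ^ n)]
  have h1 : i + (m - 1 - i) = m - 1 := by omega
  rw [show q ^ i * q ^ (m - 1 - i) = q ^ (m - 1) by rw [← pow_add, h1]]
  rw [star_pow, ((comm_star q).pow_pow i (m - 1 - i) : (star q) ^ i * q ^ (m - 1 - i)
      = q ^ (m - 1 - i) * (star q) ^ i), mul_assoc, ← pow_add, add_comm i n]

lemma termB (m n i : ℕ) (hi : i < n) (q : ℍ[ℝ]) :
    q ^ m * ((star q) ^ i * 1 * (star q) ^ (n - 1 - i))
      + qI * (q ^ m * ((star q) ^ i * qI * (star q) ^ (n - 1 - i)))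
      + qJ * (q ^ m * ((star q) ^ i * qJ * (star q) ^ (n - 1 - i)))
      + qK * (q ^ m * ((star q) ^ i * qK * (star q) ^ (n - 1 - i)))
      = -(2 * (q ^ i * (star q) ^ (m + n - 1 - i))) := by
  rw [key2 (q ^ m) ((star q) ^ i) ((star q) ^ (n - 1 - i))]
  have h1 : m + (n - 1 - i) = m + n - 1 - i := by omega
  rw [star_pow, star_star, star_pow, mul_assoc, ← pow_add, h1]

lemma comboA (m n : ℕ) (q : ℍ[ℝ]) :
    (∑ i ∈ Finset.range m, q ^ i * (1 : ℍ[ℝ]) * q ^ (m - 1 - i)) * (star q) ^ n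
      - qI * ((∑ i ∈ Finset.range m, q ^ i * qI * q ^ (m - 1 - i)) * (star q) ^ n)
      - qJ * ((∑ i ∈ Finset.range m, q ^ i * qJ * q ^ (m - 1 - i)) * (star q) ^ n)
      - qK * ((∑ i ∈ Finset.range m, q ^ i * qK * q ^ (m - 1 - i)) * (star q) ^ n)
      = ∑ i ∈ Finset.range m,
          (2 * (q ^ (m - 1) * (star q) ^ n) + 2 * (q ^ (m - 1 - i) * (star q) ^ (n + i))) := by
  simp only [Finset.sum_mul, Finset.mul_sum, ← Finset.sum_sub_distrib]
  exact Finset.sum_congr rfl fun i hi => termA m n i (Finset.mem_range.mp hi) q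

lemma comboB (m n : ℕ) (q : ℍ[ℝ]) :
    q ^ m * (∑ i ∈ Finset.range n, (star q) ^ i * (1 : ℍ[ℝ]) * (star q) ^ (n - 1 - i))
      + qI * (q ^ m * (∑ i ∈ Finset.range n, (star q) ^ i * qI * (star q) ^ (n - 1 - i)))
      + qJ * (q ^ m * (∑ i ∈ Finset.range n, (star q) ^ i * qJ * (star q) ^ (n - 1 - i)))
      + qK * (q ^ m * (∑ i ∈ Finset.range n, (star q) ^ i * qK * (star q) ^ (n - 1 - i)))
      = ∑ i ∈ Finset.range n, -(2 * (q ^ i * (star q) ^ (m + n - 1 - i))) := by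
  simp only [Finset.mul_sum, ← Finset.sum_add_distrib]
  exact Finset.sum_congr rfl fun i hi => termB m n i (Finset.mem_range.mp hi) q

lemma combo (m n : ℕ) (q : ℍ[ℝ]) :
    dd 1 (fun x => x ^ m * (star x) ^ n) q - qI * dd qI (fun x => x ^ m * (star x) ^ n) q
      - qJ * dd qJ (fun x => x ^ m * (star x) ^ n) q
      - qK * dd qK (fun x => x ^ m * (star x) ^ n) q
      = ∑ i ∈ Finset.range m,
          (2 * (q ^ (m - 1) * (star q) ^ n) + 2 * (q ^ (m - 1 - i) * (star q) ^ (n + i)))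
        - ∑ i ∈ Finset.range n, 2 * (q ^ i * (star q) ^ (m + n - 1 - i)) := by
  rw [dd_mono, dd_mono, dd_mono, dd_mono]
  rw [show (∑ i ∈ Finset.range n, 2 * (q ^ i * (star q) ^ (m + n - 1 - i)))
      = -∑ i ∈ Finset.range n, -(2 * (q ^ i * (star q) ^ (m + n - 1 - i))) by
    rw [Finset.sum_neg_distrib, neg_neg]]
  rw [← comboA m n q, ← comboB m n q, sub_neg_eq_add]
  simp only [star_one, star_qI, star_qJ, star_qK, mul_neg, neg_mul, Finset.sum_neg_distrib,
    mul_add]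
  abel

lemma coe_mul_left (c : ℝ) (a x : ℍ[ℝ]) :
    a * ((c : ℍ[ℝ]) * x) = (c : ℍ[ℝ]) * (a * x) := by
  rw [← mul_assoc, ← Quaternion.coe_commutes, mul_assoc]

lemma CFbar_Q (k : ℕ) (q : ℍ[ℝ]) :
    CFbar (Q k) q = ∑ j ∈ Finset.range (k + 1), ((T k j : ℝ) : ℍ[ℝ]) *
      (∑ i ∈ Finset.range (k - j),
          (2 * (q ^ (k - j - 1) * (star q) ^ j) + 2 * (q ^ (k - j - 1 - i) * (star q) ^ (j + i)))
        - ∑ i ∈ Finset.range j, 2 * (q ^ i * (star q) ^ ((k - j) + j - 1 - i))) := by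
  rw [CFbar, dd_Q, dd_Q, dd_Q, dd_Q]
  simp only [Finset.mul_sum]
  rw [← Finset.sum_sub_distrib, ← Finset.sum_sub_distrib, ← Finset.sum_sub_distrib]
  refine Finset.sum_congr rfl fun j hj => ?_
  rw [coe_mul_left, coe_mul_left, coe_mul_left, ← mul_sub, ← mul_sub, ← mul_sub]
  exact congrArg _ (combo (k - j) j q)

lemma coe_sum (s : Finset ℕ) (f : ℕ → ℝ) :
    ((∑ j ∈ s, f j : ℝ) : ℍ[ℝ]) = ∑ j ∈ s, ((f j : ℝ) : ℍ[ℝ]) := by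
  induction s using Finset.cons_induction with
  | empty => simp
  | cons a s ha ih => rw [Finset.sum_cons, Finset.sum_cons, Quaternion.coe_add, ih]

lemma two_q_ne : (2 : ℍ[ℝ]) ≠ 0 := fun h => by
  have := congrArg QuaternionAlgebra.re h
  simp at this

lemma half_two : (1 / 2 : ℍ[ℝ]) * 2 = 1 := by
  rw [one_div]
  exact inv_mul_cancel₀ two_q_ne

lemma half_sum (m n : ℕ) (A : ℍ[ℝ]) (B C : ℕ → ℍ[ℝ]) :
    (1 / 2 : ℍ[ℝ]) * (∑ i ∈ Finset.range m, (2 * A + 2 * B i)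
        - ∑ i ∈ Finset.range n, 2 * C i)
      = ∑ i ∈ Finset.range m, (A + B i) - ∑ i ∈ Finset.range n, C i := by
  have h2 := half_two
  rw [mul_sub, Finset.mul_sum, Finset.mul_sum]
  congr 1
  · exact Finset.sum_congr rfl fun i _ => by
      rw [mul_add, ← mul_assoc, ← mul_assoc, h2, one_mul, one_mul]
  · exact Finset.sum_congr rfl fun i _ => by rw [← mul_assoc, h2, one_mul]

lemma Tsum (k n : ℕ) :
    ∑ j ∈ Finset.range n, T k j
      = n * (2 * (k : ℝ) + 3 - n) / (((k : ℝ) + 1) * ((k : ℝ) + 2)) := by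
  have h1 : ((k : ℝ) + 1) ≠ 0 := by positivity
  have h2 : ((k : ℝ) + 2) ≠ 0 := by positivity
  induction n with
  | zero => simp
  | succ n ih =>
    rw [Finset.sum_range_succ, ih, T]
    push_cast
    field_simp
    ring

lemma coeff_id (k m : ℕ) (hk : 1 ≤ k) (hm : m < k) :
    ((k - m : ℕ) : ℝ) * T k m + ∑ j ∈ Finset.range (m + 1), T k j
        - ∑ j ∈ Finset.Ico (k - m) (k + 1), T k j
      = (k : ℝ) * T (k - 1) m := by
  rw [Finset.sum_Ico_eq_sub _ (by omega : k - m ≤ k + 1), Tsum, Tsum, Tsum]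
  have c1 : ((k - m : ℕ) : ℝ) = (k : ℝ) - m := by
    rw [Nat.cast_sub hm.le]
  have c2 : ((k - 1 : ℕ) : ℝ) = (k : ℝ) - 1 := by
    rw [Nat.cast_sub hk]
    norm_num
  simp only [T, c1, c2]
  have hk0 : (k : ℝ) ≠ 0 := by
    have : (0 : ℝ) < k := by exact_mod_cast hk
    linarith
  have h1 : ((k : ℝ) + 1) ≠ 0 := by positivity
  have h2 : ((k : ℝ) + 2) ≠ 0 := by positivity
  have h3 : ((k : ℝ) - 1 + 1) ≠ 0 := by rw [sub_add_cancel]; exact hk0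
  have h4 : ((k : ℝ) - 1 + 2) ≠ 0 := by
    rw [show (k : ℝ) - 1 + 2 = (k : ℝ) + 1 by ring]; exact h1
  push_cast
  field_simp
  ring

lemma L1eq (k : ℕ) (q : ℍ[ℝ]) :
    ∑ j ∈ Finset.range (k + 1), ∑ _i ∈ Finset.range (k - j),
        ((T k j : ℝ) : ℍ[ℝ]) * (q ^ (k - j - 1) * (star q) ^ j)
      = ∑ m ∈ Finset.range k,
          ((((k - m : ℕ) : ℝ) * T k m : ℝ) : ℍ[ℝ]) * (q ^ (k - 1 - m) * (star q) ^ m) := by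
  rw [Finset.sum_range_succ, Nat.sub_self, Finset.range_zero, Finset.sum_empty, add_zero]
  refine Finset.sum_congr rfl fun m hm => ?_
  rw [Finset.sum_const, Finset.card_range, nsmul_eq_mul]
  rw [show ((k - m : ℕ) : ℍ[ℝ]) = (((k - m : ℕ) : ℝ) : ℍ[ℝ]) from
    (Quaternion.coe_natCast (k - m)).symm]
  rw [← mul_assoc, ← Quaternion.coe_mul]
  rw [show k - m - 1 = k - 1 - m from by omega]

lemma L2eq (k : ℕ) (q : ℍ[ℝ]) :
    ∑ j ∈ Finset.range (k + 1), ∑ i ∈ Finset.range (k - j),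
        ((T k j : ℝ) : ℍ[ℝ]) * (q ^ (k - j - 1 - i) * (star q) ^ (j + i))
      = ∑ m ∈ Finset.range k,
          (((∑ j ∈ Finset.range (m + 1), T k j : ℝ)) : ℍ[ℝ])
            * (q ^ (k - 1 - m) * (star q) ^ m) := by
  have h1 : ∀ j ∈ Finset.range (k + 1),
      ∑ i ∈ Finset.range (k - j), ((T k j : ℝ) : ℍ[ℝ]) * (q ^ (k - j - 1 - i) * (star q) ^ (j + i))
        = ∑ m ∈ Finset.Ico j k, ((T k j : ℝ) : ℍ[ℝ]) * (q ^ (k - 1 - m) * (star q) ^ m) := by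
    intro j _
    rw [Finset.sum_Ico_eq_sum_range]
    refine Finset.sum_congr rfl fun i _ => ?_
    rw [show k - j - 1 - i = k - 1 - (j + i) from by omega]
  rw [Finset.sum_congr rfl h1, Finset.sum_range_succ, Finset.Ico_self, Finset.sum_empty, add_zero]
  rw [Finset.range_eq_Ico, Finset.sum_Ico_Ico_comm 0 k]
  refine Finset.sum_congr rfl fun m _ => ?_
  rw [← Finset.range_eq_Ico, ← Finset.sum_mul, ← coe_sum]

lemma L3eq (k : ℕ) (q : ℍ[ℝ]) :
    ∑ j ∈ Finset.range (k + 1), ∑ i ∈ Finset.range j,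
        ((T k j : ℝ) : ℍ[ℝ]) * (q ^ i * (star q) ^ (k - 1 - i))
      = ∑ m ∈ Finset.range k,
          (((∑ j ∈ Finset.Ico (k - m) (k + 1), T k j : ℝ)) : ℍ[ℝ])
            * (q ^ (k - 1 - m) * (star q) ^ m) := by
  conv_lhs => simp only [Finset.range_eq_Ico]
  rw [← Finset.sum_Ico_Ico_comm' 0 (k + 1)]
  rw [Finset.sum_Ico_succ_top (by omega : 0 ≤ k), Finset.Ico_self, Finset.sum_empty, add_zero]
  rw [← Finset.range_eq_Ico, ← Finset.sum_range_reflect]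
  refine Finset.sum_congr rfl fun m hm => ?_
  have hm' : m < k := Finset.mem_range.mp hm
  rw [show k - 1 - m + 1 = k - m from by omega, show k - 1 - (k - 1 - m) = m from by omega]
  rw [← Finset.sum_mul, ← coe_sum]

theorem appell_property_Q' (k : ℕ) (hk : 1 ≤ k) (q : ℍ[ℝ]) :
    (1 / 2 : ℍ[ℝ]) * CFbar (Q k) q = (k : ℍ[ℝ]) * Q (k - 1) q := by
  have hR : (k : ℍ[ℝ]) * Q (k - 1) q
      = ∑ m ∈ Finset.range k,
          ((((k : ℝ) * T (k - 1) m) : ℝ) : ℍ[ℝ]) * (q ^ (k - 1 - m) * (star q) ^ m) := by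
    rw [Q, show k - 1 + 1 = k from by omega, Finset.mul_sum]
    refine Finset.sum_congr rfl fun m _ => ?_
    rw [← Quaternion.coe_natCast k, ← mul_assoc, ← Quaternion.coe_mul]
  have hstep : ∀ j ∈ Finset.range (k + 1),
      (1 / 2 : ℍ[ℝ]) * (((T k j : ℝ) : ℍ[ℝ]) *
        (∑ i ∈ Finset.range (k - j),
            (2 * (q ^ (k - j - 1) * (star q) ^ j) + 2 * (q ^ (k - j - 1 - i) * (star q) ^ (j + i)))
          - ∑ i ∈ Finset.range j, 2 * (q ^ i * (star q) ^ ((k - j) + j - 1 - i))))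
      = ((T k j : ℝ) : ℍ[ℝ]) *
        (∑ i ∈ Finset.range (k - j),
            (q ^ (k - j - 1) * (star q) ^ j + q ^ (k - j - 1 - i) * (star q) ^ (j + i))
          - ∑ i ∈ Finset.range j, q ^ i * (star q) ^ (k - 1 - i)) := by
    intro j hj
    have hj' : j ≤ k := by
      have := Finset.mem_range.mp hj
      omega
    rw [coe_mul_left]
    congr 1
    rw [half_sum (k - j) j (q ^ (k - j - 1) * (star q) ^ j)
      (fun i => q ^ (k - j - 1 - i) * (star q) ^ (j + i))
      (fun i => q ^ i * (star q) ^ ((k - j) + j - 1 - i))]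
    have hjk : j ≤ k := Nat.lt_succ_iff.mp (Finset.mem_range.mp hj)
    congr 1
    exact Finset.sum_congr rfl fun i _ => by
      rw [show (k - j) + j - 1 - i = k - 1 - i from by omega]
  rw [CFbar_Q, Finset.mul_sum, hR, Finset.sum_congr rfl hstep]
  simp only [mul_sub, Finset.mul_sum, mul_add, Finset.sum_add_distrib, Finset.sum_sub_distrib]
  rw [L1eq k q, L2eq k q, L3eq k q, ← Finset.sum_add_distrib, ← Finset.sum_sub_distrib]
  refine Finset.sum_congr rfl fun m hm => ?_
  rw [← add_mul, ← sub_mul, ← Quaternion.coe_add, ← Quaternion.coe_sub]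
  exact congrArg (fun r : ℝ => (r : ℍ[ℝ]) * (q ^ (k - 1 - m) * (star q) ^ m))
    (coeff_id k m hk (Finset.mem_range.mp hm))

end AppellAux

/-- The polynomials `Q_k` form an Appell system with respect to the hypercomplex derivative
`(1/2)∂̄`: for all `k ≥ 1`, `(1/2)·∂̄Q_k(q) = k·Q_{k−1}(q)`. -/
theorem appell_property_Q (k : ℕ) (hk : 1 ≤ k) (q : ℍ[ℝ]) :
    (1 / 2 : ℍ[ℝ]) * CFbar (Q k) q = (k : ℍ[ℝ]) * Q (k - 1) q := by
  exact AppellAux.appell_property_Q' k hk q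

end
end

section
/- For every quaternion q and every integer k ≥ 0 one has ‖Q_k(q)‖ ≤ ‖q‖^k; moreover, for all quaternions q and p the series defining the Fock–Fueter kernel converges absolutely and satisfies the estimate ‖K_𝓕(q,p)‖ = ‖−2 ∑_{k=0}^{∞} (Q_k(q)/k!) (conj p)^{k+2}‖ ≤ 2 ‖p‖² e^{‖q‖·‖p‖}. -/
open Quaternion

noncomputable section

/-- `‖Q_k(q)‖ ≤ ‖q‖^k`, the Fock–Fueter kernel series converges absolutely, and
`‖K_𝓕(q,p)‖ ≤ 2‖p‖² e^{‖q‖‖p‖}`. -/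
theorem fockFueter_kernel_estimate (q p : ℍ[ℝ]) :
    (∀ k : ℕ, ‖Q k q‖ ≤ ‖q‖ ^ k) ∧
    Summable (fun k : ℕ => ‖((k.factorial : ℝ)⁻¹) • (Q k q * (star p) ^ (k + 2))‖) ∧
    ‖(-2 : ℍ[ℝ]) * ∑' k : ℕ, ((k.factorial : ℝ)⁻¹) • (Q k q * (star p) ^ (k + 2))‖ ≤
      2 * ‖p‖ ^ 2 * Real.exp (‖q‖ * ‖p‖) := by
  have hQ : ∀ k : ℕ, ‖Q k q‖ ≤ ‖q‖ ^ k := by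
    intro k
    have hTsum : ∑ j ∈ Finset.range (k + 1), T k j = 1 := by
      unfold T
      rw [← Finset.sum_div, ← Finset.mul_sum]
      rw [div_eq_one_iff_eq (by positivity)]
      have key : ∀ m : ℕ, ∑ j ∈ Finset.range (m + 1), ((m : ℝ) - j + 1)
          = ((m : ℝ) + 1) * ((m : ℝ) + 2) / 2 := by
        intro m
        induction m with
        | zero => norm_num
        | succ n ih =>
          rw [Finset.sum_range_succ]
          have : ∀ j ∈ Finset.range (n + 1),
              (((n : ℕ) + 1 : ℕ) : ℝ) - j + 1 = ((n : ℝ) - j + 1) + 1 := by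
            intros; push_cast; ring
          rw [Finset.sum_congr rfl this, Finset.sum_add_distrib, ih]
          simp only [Finset.sum_const, Finset.card_range, nsmul_eq_mul, mul_one]
          push_cast
          ring
      rw [key k]; ring
    calc ‖Q k q‖ ≤ ∑ j ∈ Finset.range (k + 1),
          ‖((T k j : ℝ) : ℍ[ℝ]) * (q ^ (k - j) * (star q) ^ j)‖ := norm_sum_le _ _
      _ ≤ ∑ j ∈ Finset.range (k + 1), T k j * ‖q‖ ^ k := by
          apply Finset.sum_le_sum
          intro j hj
          rw [Finset.mem_range, Nat.lt_succ_iff] at hj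
          have hjk : (j : ℝ) ≤ (k : ℝ) := by exact_mod_cast hj
          have hT0 : 0 ≤ T k j := by
            unfold T
            apply div_nonneg (by nlinarith) (by positivity)
          rw [norm_mul, norm_mul, norm_pow, norm_pow, Quaternion.norm_star,
            Quaternion.norm_coe, Real.norm_eq_abs, abs_of_nonneg hT0,
            ← pow_add, Nat.sub_add_cancel hj]
      _ = ‖q‖ ^ k := by rw [← Finset.sum_mul, hTsum, one_mul]
  have hbound : ∀ k : ℕ, ‖((k.factorial : ℝ)⁻¹) • (Q k q * (star p) ^ (k + 2))‖ ≤
      ‖p‖ ^ 2 * ((‖q‖ * ‖p‖) ^ k / k.factorial) := by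
    intro k
    rw [norm_smul, norm_mul, norm_pow, Quaternion.norm_star, Real.norm_eq_abs,
      abs_of_nonneg (by positivity)]
    calc (k.factorial : ℝ)⁻¹ * (‖Q k q‖ * ‖p‖ ^ (k + 2))
        ≤ (k.factorial : ℝ)⁻¹ * (‖q‖ ^ k * ‖p‖ ^ (k + 2)) := by
          gcongr
          exact hQ k
      _ = ‖p‖ ^ 2 * ((‖q‖ * ‖p‖) ^ k / k.factorial) := by
          rw [mul_pow]; ring
  have hsummable : Summable (fun k : ℕ =>
      ‖((k.factorial : ℝ)⁻¹) • (Q k q * (star p) ^ (k + 2))‖) := by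
    apply Summable.of_nonneg_of_le (fun k => norm_nonneg _) hbound
    exact ((Real.summable_pow_div_factorial (‖q‖ * ‖p‖)).mul_left _)
  refine ⟨hQ, hsummable, ?_⟩
  rw [norm_mul]
  have h2 : ‖(-2 : ℍ[ℝ])‖ = 2 := by
    rw [show (-2 : ℍ[ℝ]) = ((-2 : ℝ) : ℍ[ℝ]) by norm_cast, Quaternion.norm_coe]
    norm_num
  rw [h2, mul_assoc]
  gcongr
  calc ‖∑' k : ℕ, ((k.factorial : ℝ)⁻¹) • (Q k q * (star p) ^ (k + 2))‖
      ≤ ∑' k : ℕ, ‖((k.factorial : ℝ)⁻¹) • (Q k q * (star p) ^ (k + 2))‖ :=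
        norm_tsum_le_tsum_norm hsummable
    _ ≤ ∑' k : ℕ, ‖p‖ ^ 2 * ((‖q‖ * ‖p‖) ^ k / k.factorial) :=
        Summable.tsum_le_tsum hbound hsummable
          ((Real.summable_pow_div_factorial (‖q‖ * ‖p‖)).mul_left _)
    _ = ‖p‖ ^ 2 * Real.exp (‖q‖ * ‖p‖) := by
        rw [tsum_mul_left, Real.exp_eq_exp_ℝ, NormedSpace.exp_eq_tsum_div]

end
end

section
/- Let (α_k)_{k≥0} be a sequence of quaternions with ∑_{k=0}^{∞} (k!/((k+1)(k+2))) ‖α_k‖² < ∞. Then for every quaternion q the series ∑_{k=0}^{∞} ((k+1)(k+2)/k!) ‖Q_k(q)‖² converges, the series f(q) = ∑_{k=0}^{∞} Q_k(q) α_k converges absolutely in ℍ, and ‖f(q)‖ ≤ (∑_{k=0}^{∞} ((k+1)(k+2)/k!) ‖Q_k(q)‖²)^{1/2} · (∑_{k=0}^{∞} (k!/((k+1)(k+2))) ‖α_k‖²)^{1/2}. -/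
open Quaternion

noncomputable section

lemma sumT (k : ℕ) : ∑ j ∈ Finset.range (k + 1), T k j = 1 := by
  unfold T
  rw [← Finset.sum_div]
  rw [div_eq_one_iff_eq (by positivity)]
  induction k with
  | zero => norm_num
  | succ n ih =>
    rw [Finset.sum_range_succ']
    have : ∀ j ∈ Finset.range (n+1), 2 * ((((n:ℕ)+1:ℕ):ℝ) - ((j+1:ℕ):ℝ) + 1) = 2 * ((n:ℝ) - j + 1) := by
      intro j hj; push_cast; ring
    rw [Finset.sum_congr rfl this, ih]
    push_cast
    ring

lemma normQ (k : ℕ) (q : ℍ[ℝ]) : ‖Q k q‖ ≤ ‖q‖ ^ k := by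
  have hT : ∀ j ∈ Finset.range (k+1), 0 ≤ T k j := by
    intro j hj
    have hj' : (j:ℝ) ≤ k := by exact_mod_cast Nat.lt_succ_iff.mp (Finset.mem_range.mp hj)
    unfold T
    apply div_nonneg (by linarith) (by positivity)
  calc ‖Q k q‖ ≤ ∑ j ∈ Finset.range (k+1), ‖((T k j : ℝ) : ℍ[ℝ]) * (q ^ (k - j) * (star q) ^ j)‖ :=
        norm_sum_le _ _
    _ ≤ ∑ j ∈ Finset.range (k+1), T k j * ‖q‖ ^ k := by
        apply Finset.sum_le_sum
        intro j hj
        have hjk : j ≤ k := Nat.lt_succ_iff.mp (Finset.mem_range.mp hj)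
        have : ‖((T k j : ℝ) : ℍ[ℝ]) * (q ^ (k - j) * (star q) ^ j)‖
            ≤ ‖((T k j : ℝ) : ℍ[ℝ])‖ * (‖q ^ (k-j)‖ * ‖(star q : ℍ[ℝ]) ^ j‖) :=
          (norm_mul_le _ _).trans (by gcongr; exact norm_mul_le _ _)
        refine this.trans (le_of_eq ?_)
        rw [Quaternion.norm_coe, Real.norm_eq_abs, abs_of_nonneg (hT j hj),
          norm_pow, norm_pow, Quaternion.norm_star, ← pow_add, Nat.sub_add_cancel hjk]
    _ = ‖q‖ ^ k := by rw [← Finset.sum_mul, sumT, one_mul]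

lemma poly_le (k : ℕ) : ((k:ℝ)+1)*((k:ℝ)+2) ≤ 4 * 2 ^ k := by
  induction k with
  | zero => norm_num
  | succ n ih =>
    push_cast
    have hp : (1:ℝ) ≤ 2 ^ n := one_le_pow₀ (by norm_num)
    rw [pow_succ]
    have hp2 : (1:ℝ) + n ≤ 2 ^ n := by
      have := one_add_mul_le_pow (by norm_num : (-2:ℝ) ≤ 1) n
      norm_num at this; simpa using this
    have hn : (0:ℝ) ≤ n := Nat.cast_nonneg n
    nlinarith [ih, hp2, hn]

/-- If `∑ (k!/((k+1)(k+2))) ‖α_k‖² < ∞` then `∑ ((k+1)(k+2)/k!) ‖Q_k(q)‖²` converges,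
the series `f(q) = ∑ Q_k(q) α_k` converges absolutely, and the Cauchy–Schwarz type
estimate on `‖f(q)‖` holds. -/
theorem evaluation_estimate_A (α : ℕ → ℍ[ℝ])
    (hα : Summable (fun k : ℕ =>
      ((k.factorial : ℝ) / (((k : ℝ) + 1) * ((k : ℝ) + 2))) * ‖α k‖ ^ 2))
    (q : ℍ[ℝ]) :
    Summable (fun k : ℕ =>
      ((((k : ℝ) + 1) * ((k : ℝ) + 2)) / (k.factorial : ℝ)) * ‖Q k q‖ ^ 2) ∧
    Summable (fun k : ℕ => ‖Q k q * α k‖) ∧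
    ‖∑' k : ℕ, Q k q * α k‖ ≤
      Real.sqrt (∑' k : ℕ,
          ((((k : ℝ) + 1) * ((k : ℝ) + 2)) / (k.factorial : ℝ)) * ‖Q k q‖ ^ 2) *
      Real.sqrt (∑' k : ℕ,
          ((k.factorial : ℝ) / (((k : ℝ) + 1) * ((k : ℝ) + 2))) * ‖α k‖ ^ 2) := by
  set a : ℕ → ℝ := fun k => ((((k : ℝ) + 1) * ((k : ℝ) + 2)) / (k.factorial : ℝ)) * ‖Q k q‖ ^ 2
    with ha_def
  set b : ℕ → ℝ := fun k => ((k.factorial : ℝ) / (((k : ℝ) + 1) * ((k : ℝ) + 2))) * ‖α k‖ ^ 2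
    with hb_def
  have hfac : ∀ k : ℕ, (0:ℝ) < (k.factorial : ℝ) := fun k => by exact_mod_cast k.factorial_pos
  have ha0 : ∀ k, 0 ≤ a k := fun k => by
    have := hfac k; simp only [ha_def]; positivity
  have hb0 : ∀ k, 0 ≤ b k := fun k => by
    simp only [hb_def]; positivity
  have hA : Summable a := by
    refine Summable.of_nonneg_of_le ha0 (fun k => ?_)
      ((Real.summable_pow_div_factorial (2 * ‖q‖^2)).mul_left 4)
    have hf := hfac k
    have h1 : ‖Q k q‖^2 ≤ (‖q‖^2)^k := by
      calc ‖Q k q‖^2 ≤ (‖q‖^k)^2 := pow_le_pow_left₀ (norm_nonneg _) (normQ k q) 2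
        _ = (‖q‖^2)^k := by rw [← pow_mul, ← pow_mul, mul_comm]
    calc a k ≤ ((((k:ℝ)+1)*((k:ℝ)+2))/(k.factorial:ℝ)) * (‖q‖^2)^k := by
          simp only [ha_def]; exact mul_le_mul_of_nonneg_left h1 (by positivity)
      _ ≤ ((4 * 2^k)/(k.factorial:ℝ)) * (‖q‖^2)^k :=
          mul_le_mul_of_nonneg_right ((div_le_div_iff_of_pos_right hf).mpr (poly_le k)) (by positivity)
      _ = 4 * ((2 * ‖q‖^2)^k / (k.factorial:ℝ)) := by
          rw [mul_pow]; field_simp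
  have key : ∀ k, ‖Q k q * α k‖ ^ 2 = a k * b k := by
    intro k
    have hf := hfac k
    have hk1 : ((k:ℝ)+1)*((k:ℝ)+2) ≠ 0 := by positivity
    rw [norm_mul, mul_pow]
    simp only [ha_def, hb_def]
    field_simp
  have hle : ∀ k, ‖Q k q * α k‖ ≤ (a k + b k) / 2 := by
    intro k
    nlinarith [key k, norm_nonneg (Q k q * α k), ha0 k, hb0 k, sq_nonneg (a k - b k)]
  have hB : Summable (fun k => ‖Q k q * α k‖) :=
    Summable.of_nonneg_of_le (fun k => norm_nonneg _) hle ((hA.add hα).div_const 2)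
  refine ⟨hA, hB, ?_⟩
  refine (norm_tsum_le_tsum_norm hB).trans ?_
  have hta : 0 ≤ ∑' k, a k := tsum_nonneg ha0
  have htb : 0 ≤ ∑' k, b k := tsum_nonneg hb0
  rw [← Real.sqrt_mul hta]
  apply Summable.tsum_le_of_sum_le hB
  intro s
  have hcs := Finset.sum_sq_le_sum_mul_sum_of_sq_eq_mul s
    (fun i _ => ha0 i) (fun i _ => hb0 i) (fun i _ => key i)
  have h2 : ∑ i ∈ s, a i ≤ ∑' k, a k := Summable.sum_le_tsum s (fun i _ => ha0 i) hA
  have h3 : ∑ i ∈ s, b i ≤ ∑' k, b k := Summable.sum_le_tsum s (fun i _ => hb0 i) hα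
  have h4 : (∑ i ∈ s, ‖Q i q * α i‖)^2 ≤ (∑' k, a k) * (∑' k, b k) := by
    refine hcs.trans ?_
    exact mul_le_mul h2 h3 (Finset.sum_nonneg fun i _ => hb0 i) hta
  have h5 : 0 ≤ ∑ i ∈ s, ‖Q i q * α i‖ := Finset.sum_nonneg fun i _ => norm_nonneg _
  exact (Real.le_sqrt h5 (mul_nonneg hta htb)).mpr h4

end
end
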